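/- Let ν be a Borel probability measure on a compact hypersurface M ⊂ ℝ^d satisfying the ball growth condition ν(B_r) ≤ C r^α for all balls B_r of radius r ∈ (0,1], for some 0 < α ≤ d−1. Suppose moreover that the extension estimate ‖(g dν)^∧‖_{L^p(ℝ^d)} ≤ C‖g‖_{L²(dν)} holds for all continuous g, where M is the graph of a smooth function with bounded second derivatives (so M lies within distance O(r²) of its tangent plane over balls of radius r). If there exist arbitrarily small radii r with ν(B_r) ≥ c r^α, then p ≥ 2(d+1)/α. -/

import Mathlib

/-!
Constructive interference. Let `g` be a continuous cutoff equal to `1` on `B(a, ρ)` and supported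
in `B(a, 2ρ)`, and let `b ∈ B(a, ρ)` lie on the graph. By Taylor's formula the support of `g dν`
lies in a slab of width `O(ρ)` and thickness `O(ρ²)` around the tangent plane at `b`, so on the dual
tube, of volume `≍ ρ^{-(d+1)}`, all phases `ξ · y` agree with `b · y` up to `1/6` and
`|(g dν)^(y)| ≥ ν(B(a, ρ)) / 2`. The extension estimate then gives
`c ρ^α ρ^{-(d+1)/p} ≲ ν(B(a, 2ρ))^{1/2} ≲ ρ^{α/2}`, which fails as `ρ → 0` unless
`p ≥ 2(d+1)/α`.
-/

open MeasureTheory Complex Filter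
open scoped ENNReal

noncomputable def e (z : ℝ) : ℂ := Complex.exp (2 * Real.pi * Complex.I * z)

def unitCube (m : ℕ) : Set (Fin m → ℝ) := Set.univ.pi fun _ => Set.Icc 0 1

open Metric

theorem e_eq_exp (z : ℝ) : e z = Complex.exp (↑(2 * Real.pi * z) * I) := by
  rw [e]; push_cast; ring_nf

theorem e_add (a b : ℝ) : e (a + b) = e a * e b := by
  rw [e_eq_exp, e_eq_exp, e_eq_exp, ← Complex.exp_add]; push_cast; ring_nf

theorem norm_e (z : ℝ) : ‖e z‖ = 1 := by
  rw [e_eq_exp, Complex.norm_exp_ofReal_mul_I]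

theorem re_ofReal_mul_e (t s : ℝ) : ((t : ℂ) * e s).re = t * Real.cos (2 * Real.pi * s) := by
  rw [e_eq_exp, Complex.re_ofReal_mul, Complex.exp_ofReal_mul_I_re]

theorem continuous_e : Continuous e := by
  unfold e; fun_prop

theorem half_le_cos_two_pi_mul {s : ℝ} (hs : |s| ≤ 1 / 6) : 1 / 2 ≤ Real.cos (2 * Real.pi * s) := by
  rw [← Real.cos_abs, ← Real.cos_pi_div_three]
  have hπ := Real.pi_pos
  refine Real.cos_le_cos_of_nonneg_of_le_pi (abs_nonneg _) (by linarith) ?_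
  rw [abs_mul, abs_of_pos (by positivity : (0 : ℝ) < 2 * Real.pi)]
  nlinarith

theorem integral_div_two_le_norm_integral_mul_e {Ω : Type*} [MeasurableSpace Ω] {μ : Measure Ω}
    {g φ : Ω → ℝ} (hg : Integrable g μ) (hg0 : 0 ≤ g) (hφ : AEStronglyMeasurable φ μ) {θ : ℝ}
    (hphase : ∀ᵐ ξ ∂μ, g ξ ≠ 0 → |φ ξ - θ| ≤ 1 / 6) :
    (∫ ξ, g ξ ∂μ) / 2 ≤ ‖∫ ξ, (g ξ : ℂ) * e (φ ξ) ∂μ‖ := by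
  have hint : Integrable (fun ξ => (g ξ : ℂ) * e (φ ξ - θ)) μ :=
    hg.ofReal.mul_bdd (continuous_e.comp_aestronglyMeasurable (hφ.sub aestronglyMeasurable_const))
      (ae_of_all _ fun ξ => (norm_e _).le)
  have hcos : ∀ᵐ ξ ∂μ, g ξ / 2 ≤ g ξ * Real.cos (2 * Real.pi * (φ ξ - θ)) := by
    filter_upwards [hphase] with ξ hξ
    rcases eq_or_ne (g ξ) 0 with h0 | h0
    · simp [h0]
    · rw [div_eq_mul_one_div]
      exact mul_le_mul_of_nonneg_left (half_le_cos_two_pi_mul (hξ h0)) (hg0 ξ)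
  calc (∫ ξ, g ξ ∂μ) / 2 = ∫ ξ, g ξ / 2 ∂μ := (integral_div _ _).symm
    _ ≤ ∫ ξ, g ξ * Real.cos (2 * Real.pi * (φ ξ - θ)) ∂μ :=
        integral_mono_ae (hg.div_const 2)
          (by simpa only [RCLike.re_to_complex, re_ofReal_mul_e] using hint.re) hcos
    _ = (∫ ξ, (g ξ : ℂ) * e (φ ξ - θ) ∂μ).re := by
        rw [← RCLike.re_to_complex, ← integral_re hint]
        simp only [RCLike.re_to_complex, re_ofReal_mul_e]
    _ ≤ ‖∫ ξ, (g ξ : ℂ) * e (φ ξ - θ) ∂μ‖ := Complex.re_le_norm _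
    _ = ‖∫ ξ, (g ξ : ℂ) * e (φ ξ) ∂μ‖ := by
        simp only [sub_eq_add_neg, e_add, ← mul_assoc, integral_mul_const, norm_mul, norm_e,
          mul_one]

theorem mul_measure_rpow_le_eLpNorm {α ε : Type*} [MeasurableSpace α] [TopologicalSpace ε]
    [ContinuousENorm ε] {μ : Measure α} {f : α → ε} {S : Set α} (hS : MeasurableSet S)
    {p : ℝ≥0∞} (hp0 : p ≠ 0) (hpt : p ≠ ⊤) {a : ℝ≥0∞} (h : ∀ y ∈ S, a ≤ ‖f y‖ₑ) :
    a * μ S ^ (1 / p.toReal) ≤ eLpNorm f p μ := by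
  rw [← enorm_eq_self a, ← eLpNorm_indicator_const hS hp0 hpt]
  refine eLpNorm_mono_enorm fun y => ?_
  by_cases hy : y ∈ S
  · simpa [hy] using h y hy
  · simp [hy]

theorem norm_sub_sub_fderiv_le {E F : Type*} [NormedAddCommGroup E] [NormedSpace ℝ E]
    [NormedAddCommGroup F] [NormedSpace ℝ F] {f : E → F} (hf : ContDiff ℝ 2 f) {H : ℝ}
    (hH : ∀ x, ‖iteratedFDeriv ℝ 2 f x‖ ≤ H) (z y : E) :
    ‖f y - f z - fderiv ℝ f z (y - z)‖ ≤ H * ‖y - z‖ ^ 2 := by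
  have hH0 : 0 ≤ H := (norm_nonneg _).trans (hH z)
  have hf' : Differentiable ℝ (fderiv ℝ f) :=
    (hf.fderiv_right (m := 1) le_rfl).differentiable one_ne_zero
  have hlip (x : E) : ‖fderiv ℝ f x - fderiv ℝ f z‖ ≤ H * ‖x - z‖ :=
    convex_univ.norm_image_sub_le_of_norm_fderiv_le (fun x _ => hf' x)
      (fun x _ => by rw [← norm_iteratedFDeriv_one, norm_iteratedFDeriv_fderiv]; exact hH x)
      trivial trivial
  calc ‖f y - f z - fderiv ℝ f z (y - z)‖ ≤ H * ‖y - z‖ * ‖y - z‖ :=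
        (convex_closedBall z ‖y - z‖).norm_image_sub_le_of_norm_fderiv_le'
          (fun x _ => hf.differentiable two_ne_zero x)
          (fun x hx => (hlip x).trans (by rw [← dist_eq_norm]; gcongr; exact hx))
          (mem_closedBall_self (norm_nonneg _)) (by simp [dist_eq_norm])
    _ = H * ‖y - z‖ ^ 2 := by ring

theorem exists_forall_eq_dotProduct {m : ℕ} (L : (Fin m → ℝ) →L[ℝ] ℝ) :
    ∃ w : Fin m → ℝ, ∀ v, L v = v ⬝ᵥ w :=
  ⟨fun i => L fun j => if i = j then 1 else 0, L.toLinearMap.pi_apply_eq_sum_univ⟩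

theorem abs_dotProduct_le {m : ℕ} (u v : Fin m → ℝ) : |u ⬝ᵥ v| ≤ m * (‖u‖ * ‖v‖) := by
  calc |u ⬝ᵥ v| ≤ ∑ i, |u i * v i| := Finset.abs_sum_le_sum_abs _ _
    _ ≤ ∑ _i : Fin m, ‖u‖ * ‖v‖ := Finset.sum_le_sum fun i _ => by
        rw [abs_mul]; exact mul_le_mul (norm_le_pi_norm u i) (norm_le_pi_norm v i)
          (abs_nonneg _) (norm_nonneg _)
    _ = m * (‖u‖ * ‖v‖) := by simp

/-- For `A = δ / ρ`, `B = δ / ρ ^ 2` this is the dual of a slab of width `ρ` and thickness `ρ ^ 2`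
tangent to a graph with gradient `w`: over such a slab the phase `ξ.1 ⬝ᵥ y.1 + ξ.2 * y.2` varies
by `O(δ)`. -/
def tube {m : ℕ} (w : Fin m → ℝ) (A B : ℝ) : Set ((Fin m → ℝ) × ℝ) :=
  {y | ‖y.1 + y.2 • w‖ ≤ A ∧ |y.2| ≤ B}

theorem measurableSet_tube {m : ℕ} (w : Fin m → ℝ) (A B : ℝ) : MeasurableSet (tube w A B) := by
  rw [tube, Set.ofPred_and]
  exact (measurableSet_le (by fun_prop) measurable_const).inter
    (measurableSet_le (by fun_prop) measurable_const)

theorem volume_tube {m : ℕ} (w : Fin m → ℝ) {A : ℝ} (hA : 0 ≤ A) (B : ℝ) :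
    volume (tube w A B) = ENNReal.ofReal ((2 * A) ^ m * (2 * B)) := by
  have hslice (t : ℝ) : volume ((fun v => (v, t)) ⁻¹' tube w A B) =
      (Set.Icc (-B) B).indicator (fun _ => ENNReal.ofReal ((2 * A) ^ m)) t := by
    by_cases ht : t ∈ Set.Icc (-B) B
    · have : (fun v => (v, t)) ⁻¹' tube w A B = (· + t • w) ⁻¹' closedBall 0 A := by
        ext v; simp [tube, abs_le.2 ht, dist_eq_norm]
      rw [this, measure_preimage_add_right, Real.volume_pi_closedBall 0 hA,
        Set.indicator_of_mem ht, Fintype.card_fin]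
    · have : (fun v => (v, t)) ⁻¹' tube w A B = ∅ := by
        ext v; simp [tube, abs_le, Set.mem_Icc.not.1 ht]
      rw [this, Set.indicator_of_notMem ht, measure_empty]
  rw [Measure.volume_eq_prod, Measure.prod_apply_symm (measurableSet_tube w A B),
    lintegral_congr hslice, lintegral_indicator_const measurableSet_Icc, Real.volume_Icc,
    ← ENNReal.ofReal_mul (by positivity)]
  ring_nf

theorem abs_phase_sub_le {m : ℕ} {ξ b y : (Fin m → ℝ) × ℝ} {w : Fin m → ℝ} {A B R E : ℝ}
    (hy : y ∈ tube w A B) (hξb : ‖ξ.1 - b.1‖ ≤ R)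
    (hrem : |ξ.2 - b.2 - (ξ.1 - b.1) ⬝ᵥ w| ≤ E) :
    |(ξ.1 ⬝ᵥ y.1 + ξ.2 * y.2) - (b.1 ⬝ᵥ y.1 + b.2 * y.2)| ≤ m * (R * A) + B * E := by
  have hsplit : (ξ.1 ⬝ᵥ y.1 + ξ.2 * y.2) - (b.1 ⬝ᵥ y.1 + b.2 * y.2) =
      (ξ.1 - b.1) ⬝ᵥ (y.1 + y.2 • w) + y.2 * (ξ.2 - b.2 - (ξ.1 - b.1) ⬝ᵥ w) := by
    simp only [dotProduct_add, dotProduct_smul, sub_dotProduct, smul_eq_mul]; ring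
  rw [hsplit]
  refine (abs_add_le _ _).trans (add_le_add ?_ ?_)
  · exact (abs_dotProduct_le _ _).trans (by gcongr; exact (norm_nonneg _).trans hξb; exact hy.1)
  · rw [abs_mul]; exact mul_le_mul hy.2 hrem (abs_nonneg _) ((abs_nonneg _).trans hy.2)

theorem rpow_mul_le_of_mul_rpow_le {m : ℕ} {α p c C δ ρ : ℝ} (hρ : 0 < ρ) (hδ : 0 ≤ δ)
    (h : c * ρ ^ α / 2 * ((2 * (δ / ρ)) ^ m * (2 * (δ / ρ ^ 2))) ^ (1 / p) ≤
      C * √(C * (2 * ρ) ^ α)) :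
    c / 2 * ((2 * δ) ^ (m + 1)) ^ (1 / p) * ρ ^ (α / 2 - (m + 2) / p) ≤ C * √(C * 2 ^ α) := by
  have hvol : ((2 * (δ / ρ)) ^ m * (2 * (δ / ρ ^ 2))) ^ (1 / p) =
      ((2 * δ) ^ (m + 1)) ^ (1 / p) * ρ ^ (-((m + 2) / p)) := by
    have : (2 * (δ / ρ)) ^ m * (2 * (δ / ρ ^ 2)) = (2 * δ) ^ (m + 1) * (ρ ^ (m + 2))⁻¹ := by
      rw [mul_div_assoc', div_pow]; field_simp; ring
    rw [this, Real.mul_rpow (by positivity) (by positivity), Real.inv_rpow (by positivity),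
      ← Real.rpow_natCast ρ, ← Real.rpow_mul hρ.le, ← Real.rpow_neg hρ.le]
    push_cast; ring_nf
  have hsqrt : √(C * (2 * ρ) ^ α) = √(C * 2 ^ α) * ρ ^ (α / 2) := by
    rw [Real.mul_rpow zero_le_two hρ.le, ← mul_assoc, Real.sqrt_mul' _ (by positivity),
      Real.sqrt_eq_rpow (ρ ^ α), ← Real.rpow_mul hρ.le]
    ring_nf
  have hexp : ρ ^ α * ρ ^ (-((m + 2) / p)) = ρ ^ (α / 2 - (m + 2) / p) * ρ ^ (α / 2) := by
    rw [← Real.rpow_add hρ, ← Real.rpow_add hρ]; ring_nf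
  rw [hvol, hsqrt] at h
  refine le_of_mul_le_mul_right ?_ (Real.rpow_pos_of_pos hρ (α / 2))
  linear_combination h - c / 2 * ((2 * δ) ^ (m + 1)) ^ (1 / p) * hexp

section Extension

variable {m : ℕ} {Φ : (Fin m → ℝ) → ℝ} {H : ℝ} {ν : Measure ((Fin m → ℝ) × ℝ)}

theorem abs_phase_sub_le_of_graph (hΦ : ContDiff ℝ 2 Φ)
    (hHess : ∀ η, ‖iteratedFDeriv ℝ 2 Φ η‖ ≤ H) {ξ b y : (Fin m → ℝ) × ℝ} {w : Fin m → ℝ}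
    (hw : ∀ v, fderiv ℝ Φ b.1 v = v ⬝ᵥ w) (hξ : ξ.2 = Φ ξ.1) (hb : b.2 = Φ b.1)
    {ρ δ : ℝ} (hρ : 0 < ρ) (hξb : dist ξ b ≤ 3 * ρ)
    (hy : y ∈ tube w (δ / ρ) (δ / ρ ^ 2)) :
    |(ξ.1 ⬝ᵥ y.1 + ξ.2 * y.2) - (b.1 ⬝ᵥ y.1 + b.2 * y.2)| ≤ δ * (3 * m + 9 * H) := by
  have hH0 : 0 ≤ H := (norm_nonneg _).trans (hHess 0)
  have hR : ‖ξ.1 - b.1‖ ≤ 3 * ρ := by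
    rw [← dist_eq_norm]
    exact (le_max_left _ _).trans (by rwa [Prod.dist_eq] at hξb)
  have hrem : |ξ.2 - b.2 - (ξ.1 - b.1) ⬝ᵥ w| ≤ H * (3 * ρ) ^ 2 := by
    rw [hξ, hb, ← hw, ← Real.norm_eq_abs]
    exact (norm_sub_sub_fderiv_le hΦ hHess b.1 ξ.1).trans (by gcongr)
  refine (abs_phase_sub_le hy hR hrem).trans (le_of_eq ?_)
  field_simp
  ring

variable {a : (Fin m → ℝ) × ℝ} {ρ : ℝ} {g : C((Fin m → ℝ) × ℝ, ℝ)}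

theorem integrable_of_forall_mem_Icc [IsFiniteMeasure ν] (hg : ∀ ξ, g ξ ∈ Set.Icc (0 : ℝ) 1) :
    Integrable g ν :=
  .of_bound g.continuous.aestronglyMeasurable 1
    (ae_of_all _ fun ξ => by rw [Real.norm_eq_abs, abs_of_nonneg (hg ξ).1]; exact (hg ξ).2)

theorem measureReal_ball_div_two_le_norm_integral [IsFiniteMeasure ν] (hΦ : ContDiff ℝ 2 Φ)
    (hHess : ∀ η, ‖iteratedFDeriv ℝ 2 Φ η‖ ≤ H) (hgraph : ∀ᵐ ξ ∂ν, ξ.2 = Φ ξ.1)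
    (hρ : 0 < ρ) (hg : ∀ ξ, g ξ ∈ Set.Icc (0 : ℝ) 1) (hg1 : Set.EqOn g 1 (closedBall a ρ))
    (hg0 : Set.EqOn g 0 (ball a (2 * ρ))ᶜ) {b : (Fin m → ℝ) × ℝ} (hba : b ∈ ball a ρ)
    (hb : b.2 = Φ b.1) {w : Fin m → ℝ} (hw : ∀ v, fderiv ℝ Φ b.1 v = v ⬝ᵥ w) {δ : ℝ}
    (hδH : δ * (3 * m + 9 * H) ≤ 1 / 6) {y : (Fin m → ℝ) × ℝ}
    (hy : y ∈ tube w (δ / ρ) (δ / ρ ^ 2)) :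
    ν.real (ball a ρ) / 2 ≤ ‖∫ ξ, (g ξ : ℂ) * e (-(ξ.1 ⬝ᵥ y.1 + ξ.2 * y.2)) ∂ν‖ := by
  have hint := integrable_of_forall_mem_Icc (ν := ν) hg
  have hmass : ν.real (ball a ρ) ≤ ∫ ξ, g ξ ∂ν := by
    rw [← integral_indicator_one measurableSet_ball]
    refine integral_mono ((integrable_const 1).indicator measurableSet_ball) hint fun ξ => ?_
    by_cases hξ : ξ ∈ ball a ρ
    · simp [hξ, hg1 (ball_subset_closedBall hξ)]
    · simp [hξ, (hg ξ).1]
  have hphase : ∀ᵐ ξ ∂ν, g ξ ≠ 0 →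
      |-(ξ.1 ⬝ᵥ y.1 + ξ.2 * y.2) - -(b.1 ⬝ᵥ y.1 + b.2 * y.2)| ≤ 1 / 6 := by
    filter_upwards [hgraph] with ξ hξ hgξ
    have hξa : dist ξ a < 2 * ρ := by
      by_contra h
      exact hgξ (hg0 (by simpa using h))
    have hξb : dist ξ b ≤ 3 * ρ := by
      linarith [dist_triangle_right ξ b a, mem_ball.1 hba]
    rw [neg_sub_neg, abs_sub_comm]
    exact (abs_phase_sub_le_of_graph hΦ hHess hw hξ hb hρ hξb hy).trans hδH
  exact (div_le_div_of_nonneg_right hmass zero_le_two).trans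
    (integral_div_two_le_norm_integral_mul_e hint (fun ξ => (hg ξ).1) (by fun_prop) hphase)

theorem integral_norm_sq_le_measureReal_ball [IsFiniteMeasure ν]
    (hg : ∀ ξ, g ξ ∈ Set.Icc (0 : ℝ) 1) (hg0 : Set.EqOn g 0 (ball a (2 * ρ))ᶜ) :
    ∫ ξ, ‖(g ξ : ℂ)‖ ^ 2 ∂ν ≤ ν.real (ball a (2 * ρ)) := by
  have hle (ξ) : ‖(g ξ : ℂ)‖ ^ 2 ≤ (ball a (2 * ρ)).indicator (1 : (Fin m → ℝ) × ℝ → ℝ) ξ := by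
    by_cases hξ : ξ ∈ ball a (2 * ρ)
    · obtain ⟨h0, h1⟩ := hg ξ
      simp only [Complex.norm_real, Real.norm_eq_abs, sq_abs, Set.indicator_of_mem hξ,
        Pi.one_apply]
      nlinarith
    · simp [hξ, hg0 hξ]
  have hind : Integrable ((ball a (2 * ρ)).indicator (1 : (Fin m → ℝ) × ℝ → ℝ)) ν :=
    (integrable_const 1).indicator measurableSet_ball
  rw [← integral_indicator_one measurableSet_ball]
  refine integral_mono (hind.mono' (by fun_prop) (ae_of_all _ fun ξ => ?_)) hind hle
  rw [Real.norm_of_nonneg (by positivity)]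
  exact hle ξ

theorem measureReal_ball_mul_rpow_le [IsFiniteMeasure ν] (hΦ : ContDiff ℝ 2 Φ)
    (hHess : ∀ η, ‖iteratedFDeriv ℝ 2 Φ η‖ ≤ H) (hgraph : ∀ᵐ ξ ∂ν, ξ.2 = Φ ξ.1) {C p : ℝ}
    (hC : 0 ≤ C) (hp : 0 < p)
    (hext : ∀ g : (Fin m → ℝ) × ℝ → ℂ, Continuous g →
      eLpNorm (fun y : (Fin m → ℝ) × ℝ => ∫ ξ, g ξ * e (-(ξ.1 ⬝ᵥ y.1 + ξ.2 * y.2)) ∂ν)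
        (ENNReal.ofReal p) volume ≤ ENNReal.ofReal (C * √(∫ ξ, ‖g ξ‖ ^ 2 ∂ν)))
    (a : (Fin m → ℝ) × ℝ) (hρ : 0 < ρ) {δ : ℝ} (hδ : 0 ≤ δ)
    (hδH : δ * (3 * m + 9 * H) ≤ 1 / 6) :
    ν.real (ball a ρ) / 2 * ((2 * (δ / ρ)) ^ m * (2 * (δ / ρ ^ 2))) ^ (1 / p) ≤
      C * √(ν.real (ball a (2 * ρ))) := by
  by_cases hν : ν (ball a ρ) = 0
  · simp only [Measure.real, hν, ENNReal.toReal_zero, zero_div, zero_mul]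
    positivity
  obtain ⟨b, hba, hb⟩ :=
    Measure.exists_mem_of_measure_ne_zero_of_ae hν (ae_restrict_of_ae hgraph)
  obtain ⟨w, hw⟩ := exists_forall_eq_dotProduct (fderiv ℝ Φ b.1)
  obtain ⟨g, hg0, hg1, hg⟩ := exists_continuous_zero_one_of_isClosed
    isOpen_ball.isClosed_compl isClosed_closedBall
    (Set.disjoint_compl_left_iff_subset.2
      (closedBall_subset_ball (x := a) (by linarith : ρ < 2 * ρ)))
  set F : (Fin m → ℝ) × ℝ → ℂ := fun y => ∫ ξ, (g ξ : ℂ) * e (-(ξ.1 ⬝ᵥ y.1 + ξ.2 * y.2)) ∂ν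
  have hF (y) (hy : y ∈ tube w (δ / ρ) (δ / ρ ^ 2)) :
      ENNReal.ofReal (ν.real (ball a ρ) / 2) ≤ ‖F y‖ₑ :=
    (ENNReal.ofReal_le_ofReal (measureReal_ball_div_two_le_norm_integral hΦ hHess
      hgraph hρ hg hg1 hg0 hba hb hw hδH hy)).trans_eq (ofReal_norm _)
  have hlow := mul_measure_rpow_le_eLpNorm (μ := volume) (measurableSet_tube w _ _)
    (p := ENNReal.ofReal p) (by simpa using hp) ENNReal.ofReal_ne_top hF
  have hup : eLpNorm F (ENNReal.ofReal p) volume ≤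
      ENNReal.ofReal (C * √(ν.real (ball a (2 * ρ)))) :=
    (hext (fun ξ => g ξ) (by fun_prop)).trans <| ENNReal.ofReal_le_ofReal <|
      mul_le_mul_of_nonneg_left
        (Real.sqrt_le_sqrt (integral_norm_sq_le_measureReal_ball hg hg0)) hC
  rw [volume_tube w (by positivity), ENNReal.toReal_ofReal hp.le,
    ENNReal.ofReal_rpow_of_nonneg (by positivity) (by positivity),
    ← ENNReal.ofReal_mul (by positivity)] at hlow
  exact (ENNReal.ofReal_le_ofReal_iff (by positivity)).1 (hlow.trans hup)

theorem mul_rpow_le_of_ofReal_le_measure_ball [IsFiniteMeasure ν] (hΦ : ContDiff ℝ 2 Φ)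
    (hHess : ∀ η, ‖iteratedFDeriv ℝ 2 Φ η‖ ≤ H) (hgraph : ∀ᵐ ξ ∂ν, ξ.2 = Φ ξ.1) {C c α p : ℝ}
    (hC : 0 ≤ C) (hp : 0 < p)
    (hext : ∀ g : (Fin m → ℝ) × ℝ → ℂ, Continuous g →
      eLpNorm (fun y : (Fin m → ℝ) × ℝ => ∫ ξ, g ξ * e (-(ξ.1 ⬝ᵥ y.1 + ξ.2 * y.2)) ∂ν)
        (ENNReal.ofReal p) volume ≤ ENNReal.ofReal (C * √(∫ ξ, ‖g ξ‖ ^ 2 ∂ν)))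
    (hρ : 0 < ρ) (hupper : ν (ball a (2 * ρ)) ≤ ENNReal.ofReal (C * (2 * ρ) ^ α))
    (hlower : ENNReal.ofReal (c * ρ ^ α) ≤ ν (ball a ρ)) {δ : ℝ} (hδ : 0 ≤ δ)
    (hδH : δ * (3 * m + 9 * H) ≤ 1 / 6) :
    c / 2 * ((2 * δ) ^ (m + 1)) ^ (1 / p) * ρ ^ (α / 2 - (m + 2) / p) ≤ C * √(C * 2 ^ α) := by
  refine rpow_mul_le_of_mul_rpow_le hρ hδ ?_
  calc c * ρ ^ α / 2 * ((2 * (δ / ρ)) ^ m * (2 * (δ / ρ ^ 2))) ^ (1 / p)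
      ≤ ν.real (ball a ρ) / 2 * ((2 * (δ / ρ)) ^ m * (2 * (δ / ρ ^ 2))) ^ (1 / p) := by
        gcongr
        exact (ENNReal.ofReal_le_iff_le_toReal (measure_ne_top _ _)).1 hlower
    _ ≤ C * √(ν.real (ball a (2 * ρ))) :=
        measureReal_ball_mul_rpow_le hΦ hHess hgraph hC hp hext a hρ hδ hδH
    _ ≤ C * √(C * (2 * ρ) ^ α) := by
        gcongr
        exact ENNReal.toReal_le_of_le_ofReal (by positivity) hupper

end Extension

theorem stmt10_general (d : ℕ) (hd : 2 ≤ d) (α p : ℝ) (hα0 : 0 < α)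
    (hp : 1 ≤ p)
    (Pi : (Fin (d-1) → ℝ) → ℝ) (hPi : ContDiff ℝ 2 Pi)
    (H : ℝ) (hHess : ∀ η, ‖iteratedFDeriv ℝ 2 Pi η‖ ≤ H)
    (ν : Measure ((Fin (d-1) → ℝ) × ℝ)) [IsProbabilityMeasure ν]
    (hsupp : ν {ξ : (Fin (d-1) → ℝ) × ℝ | ¬ (ξ.1 ∈ unitCube (d-1) ∧ ξ.2 = Pi ξ.1)} = 0)
    (C c : ℝ) (hC : 0 < C) (hc : 0 < c)
    (hgrowth : ∀ (x : (Fin (d-1) → ℝ) × ℝ) (r : ℝ), 0 < r → r ≤ 1 →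
      ν (Metric.ball x r) ≤ ENNReal.ofReal (C * r ^ α))
    (hext : ∀ g : ((Fin (d-1) → ℝ) × ℝ) → ℂ, Continuous g →
      eLpNorm (fun x : (Fin (d-1) → ℝ) × ℝ =>
          ∫ ξ, g ξ * e (-(∑ i, ξ.1 i * x.1 i + ξ.2 * x.2)) ∂ν)
        (ENNReal.ofReal p) volume
        ≤ ENNReal.ofReal (C * Real.sqrt (∫ ξ, ‖g ξ‖ ^ 2 ∂ν)))
    (x : ℕ → (Fin (d-1) → ℝ) × ℝ) (r : ℕ → ℝ) (hr0 : ∀ j, 0 < r j)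
    (hrlim : Tendsto r atTop (nhds 0))
    (hbig : ∀ j, ENNReal.ofReal (c * r j ^ α) ≤ ν (Metric.ball (x j) (r j))) :
    2 * ((d:ℝ) + 1) / α ≤ p := by
  by_contra! hcon
  have hgraph : ∀ᵐ ξ ∂ν, ξ.2 = Pi ξ.1 := (ae_iff.2 hsupp).mono fun ξ h => h.2
  obtain ⟨δ, hδ, hδH⟩ := exists_pos_mul_lt (by norm_num : (0 : ℝ) < 1 / 6)
    (3 * ((d - 1 : ℕ) : ℝ) + 9 * H)
  have hscale (j : ℕ) (hj : r j < 1 / 2) :=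
    mul_rpow_le_of_ofReal_le_measure_ball hPi hHess hgraph hC.le (by linarith) hext (hr0 j)
      (hgrowth (x j) (2 * r j) (by linarith [hr0 j]) (by linarith)) (hbig j) hδ.le (by linarith)
  have hβ : α / 2 - (((d - 1 : ℕ) : ℝ) + 2) / p < 0 := by
    rw [Nat.cast_sub (by omega), sub_neg, lt_div_iff₀ (by linarith)]
    rw [lt_div_iff₀ hα0] at hcon
    push_cast
    linarith
  have htend := ((tendsto_rpow_neg_nhdsGT_zero hβ).comp
    (tendsto_nhdsWithin_iff.2 ⟨hrlim, Eventually.of_forall hr0⟩)).const_mul_atTop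
    (by positivity : 0 < c / 2 * ((2 * δ) ^ (d - 1 + 1)) ^ (1 / p))
  obtain ⟨j, hjbig, hjsmall⟩ := ((htend.eventually_gt_atTop (C * √(C * 2 ^ α))).and
    (hrlim.eventually_lt_const (by norm_num : (0 : ℝ) < 1 / 2))).exists
  exact hjbig.not_ge (hscale j hjsmall)

theorem stmt10 (d : ℕ) (hd : 2 ≤ d) (α p : ℝ) (hα0 : 0 < α) (hα1 : α ≤ (d:ℝ) - 1)
    (hp : 1 ≤ p)
    (Pi : (Fin (d-1) → ℝ) → ℝ) (hPi : ContDiff ℝ 2 Pi)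
    (H : ℝ) (hHess : ∀ η, ‖iteratedFDeriv ℝ 2 Pi η‖ ≤ H)
    (ν : Measure ((Fin (d-1) → ℝ) × ℝ)) [IsProbabilityMeasure ν]
    (hsupp : ν {ξ : (Fin (d-1) → ℝ) × ℝ | ¬ (ξ.1 ∈ unitCube (d-1) ∧ ξ.2 = Pi ξ.1)} = 0)
    (C c : ℝ) (hC : 0 < C) (hc : 0 < c)
    (hgrowth : ∀ (x : (Fin (d-1) → ℝ) × ℝ) (r : ℝ), 0 < r → r ≤ 1 →
      ν (Metric.ball x r) ≤ ENNReal.ofReal (C * r ^ α))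
    (hext : ∀ g : ((Fin (d-1) → ℝ) × ℝ) → ℂ, Continuous g →
      eLpNorm (fun x : (Fin (d-1) → ℝ) × ℝ =>
          ∫ ξ, g ξ * e (-(∑ i, ξ.1 i * x.1 i + ξ.2 * x.2)) ∂ν)
        (ENNReal.ofReal p) volume
        ≤ ENNReal.ofReal (C * Real.sqrt (∫ ξ, ‖g ξ‖ ^ 2 ∂ν)))
    (x : ℕ → (Fin (d-1) → ℝ) × ℝ) (r : ℕ → ℝ) (hr0 : ∀ j, 0 < r j)
    (hrlim : Tendsto r atTop (nhds 0))
    (hbig : ∀ j, ENNReal.ofReal (c * r j ^ α) ≤ ν (Metric.ball (x j) (r j))) :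
    2 * ((d:ℝ) + 1) / α ≤ p :=
  stmt10_general d hd α p hα0 hp Pi hPi H hHess ν hsupp C c hC hc hgrowth hext x r hr0 hrlim hbig
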